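/- arXiv:1908.03193 — 2 statements merged into one kernel-verified Lean document; each statement's English description precedes it below -/
import Mathlib

section
/- Let E and F be vector lattices with F Dedekind complete, and let T : E → F be an order bounded operator (so that its modulus |T| exists). Then T is b-order bounded if and only if |T| is b-order bounded. -/
/-!
A positive order bounded operator `R : E → F` is `b`-order bounded: its second adjoint
`R'' : E^~~ → F^~~` is monotone and satisfies `R'' ∘ Q_E = Q_F ∘ R`, so it carries an order
interval of `E^~~` containing `Q_E(A)` to one containing `Q_F(R(A))`. Both `|T| - T` and
`|T| + T` are positive, and `b`-order bounded operators are closed under sums and differences,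
so `|T| = (|T| - T) + T` and `T = (|T| + T) - |T|` give the two implications.
-/

open Set

noncomputable section

/-- A subset of a type with an order is order bounded. -/
def OrdBdd {V : Type*} [LE V] (S : Set V) : Prop :=
  ∃ a b : V, ∀ x ∈ S, a ≤ x ∧ x ≤ b

variable (V : Type*) [AddCommGroup V] [Module ℝ V] [Preorder V]

/-- The order dual `V^~` of an ordered vector space `V`: the submodule of those linear
functionals mapping order bounded sets to (order) bounded sets. -/
def obDual : Submodule ℝ (V →ₗ[ℝ] ℝ) where
  carrier := {f | ∀ S : Set V, OrdBdd S → OrdBdd (f '' S)}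
  zero_mem' := by
    intro S _
    exact ⟨0, 0, by rintro _ ⟨x, hx, rfl⟩; simp⟩
  add_mem' := by
    intro f g hf hg S hS
    obtain ⟨a, b, hab⟩ := hf S hS
    obtain ⟨c, d, hcd⟩ := hg S hS
    refine ⟨a + c, b + d, ?_⟩
    rintro _ ⟨x, hx, rfl⟩
    have h1 := hab (f x) ⟨x, hx, rfl⟩
    have h2 := hcd (g x) ⟨x, hx, rfl⟩
    simp only [LinearMap.add_apply]
    constructor <;> linarith [h1.1, h1.2, h2.1, h2.2]
  smul_mem' := by
    intro c f hf S hS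
    obtain ⟨a, b, hab⟩ := hf S hS
    refine ⟨-(|c| * max |a| |b|), |c| * max |a| |b|, ?_⟩
    rintro _ ⟨x, hx, rfl⟩
    obtain ⟨h1a, h1b⟩ := hab (f x) ⟨x, hx, rfl⟩
    have hfx : |f x| ≤ max |a| |b| := by
      refine abs_le.2 ⟨?_, ?_⟩
      · have h := neg_abs_le a
        have h' := le_max_left |a| |b|
        linarith
      · have h := le_abs_self b
        have h' := le_max_right |a| |b|
        linarith
    have habs : |(c • f) x| ≤ |c| * max |a| |b| := by
      simp only [LinearMap.smul_apply, smul_eq_mul, abs_mul]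
      exact mul_le_mul_of_nonneg_left hfx (abs_nonneg c)
    exact abs_le.1 habs

/-- The order on the order dual: `f ≤ g` iff `f x ≤ g x` for every `0 ≤ x`. -/
instance obDualPreorder : Preorder ↥(obDual V) where
  le f g := ∀ x : V, 0 ≤ x → (f : V →ₗ[ℝ] ℝ) x ≤ (g : V →ₗ[ℝ] ℝ) x
  le_refl f x _ := le_rfl
  le_trans f g h h1 h2 x hx := (h1 x hx).trans (h2 x hx)

/-- The order bidual `V^~~` of `V`. -/
abbrev Bidual := ↥(obDual ↥(obDual V))

instance bidualPreorder : Preorder (Bidual V) := obDualPreorder ↥(obDual V)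

variable {V}

/-- Evaluation at `x` as a linear functional on the order dual. -/
def evalMap (x : V) : ↥(obDual V) →ₗ[ℝ] ℝ where
  toFun f := (f : V →ₗ[ℝ] ℝ) x
  map_add' f g := by simp
  map_smul' c f := by simp

variable (E : Type*) [AddCommGroup E] [Module ℝ E] [Lattice E]
  [CovariantClass E E (· + ·) (· ≤ ·)]

/-- The canonical evaluation map `Q_E : E → E^~~`. -/
def QE (x : E) : Bidual E :=
  ⟨evalMap x, by
    intro S hS
    obtain ⟨φ, ψ, h⟩ := hS
    refine ⟨(φ : E →ₗ[ℝ] ℝ) (x ⊔ 0) - (ψ : E →ₗ[ℝ] ℝ) (-x ⊔ 0),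
            (ψ : E →ₗ[ℝ] ℝ) (x ⊔ 0) - (φ : E →ₗ[ℝ] ℝ) (-x ⊔ 0), ?_⟩
    rintro _ ⟨f, hf, rfl⟩
    obtain ⟨hφf, hfψ⟩ := h f hf
    have hx1 : (0 : E) ≤ x ⊔ 0 := le_sup_right
    have hx2 : (0 : E) ≤ -x ⊔ 0 := le_sup_right
    have hdecomp : (f : E →ₗ[ℝ] ℝ) x
        = (f : E →ₗ[ℝ] ℝ) (x ⊔ 0) - (f : E →ₗ[ℝ] ℝ) (-x ⊔ 0) := by
      rw [← map_sub]
      congr 1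
      have := posPart_sub_negPart x
      simpa [posPart, negPart] using this.symm
    have h1 := hφf _ hx1
    have h2 := hfψ _ hx1
    have h3 := hφf _ hx2
    have h4 := hfψ _ hx2
    have hev : evalMap x f = (f : E →ₗ[ℝ] ℝ) x := rfl
    rw [hev, hdecomp]
    exact ⟨by linarith, by linarith⟩⟩

/-- `A ⊆ E` is `b`-order bounded: its canonical image in `E^~~` is order bounded. -/
def BOrdBddSet (A : Set E) : Prop := OrdBdd (QE E '' A)

/-- `Q_E` is an (injective) lattice embedding of `E` into `E^~~`. -/
def QLatticeEmbedding : Prop :=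
  Function.Injective (QE E) ∧ (∀ x y : E, x ≤ y ↔ QE E x ≤ QE E y) ∧
    ∀ x y : E, IsLUB {QE E x, QE E y} (QE E (x ⊔ y))

/-- `E` is `b`-Dedekind complete: every nonempty subset of `E` bounded above by an element
of `E^~~` has a supremum in `E`. -/
def BDedekindComplete : Prop :=
  ∀ S : Set E, S.Nonempty → (∃ φ : Bidual E, ∀ a ∈ S, QE E a ≤ φ) → ∃ s : E, IsLUB S s

variable {E}

/-- The net `x` in `E` is `b`-order convergent to `a`: some net in `E^~~` with the same
index set decreases to `0` in `E^~~` and dominates `|x i - a|` (canonically embedded). -/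
def BOConv {ι : Type*} [Preorder ι] (x : ι → E) (a : E) : Prop :=
  ∃ y : ι → Bidual E, Antitone y ∧ IsGLB (Set.range y) 0 ∧ ∀ i, QE E (|x i - a|) ≤ y i

/-- `x_α ↓_b 0` : the net `x` is decreasing and `inf_α x_α = 0` holds in `E^~~`. -/
def DownB0 {ι : Type*} [Preorder ι] (x : ι → E) : Prop :=
  Antitone x ∧ IsGLB (Set.range fun i => QE E (x i)) 0

section Operators

variable {G : Type*} [AddCommGroup G] [Module ℝ G] [Lattice G]
  [CovariantClass G G (· + ·) (· ≤ ·)]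

/-- `T` is an order bounded operator. -/
def OrderBddOp (T : E →ₗ[ℝ] G) : Prop := ∀ A : Set E, OrdBdd A → OrdBdd (T '' A)

/-- `T` is a `b`-order bounded operator: it maps `b`-order bounded sets to
`b`-order bounded sets. -/
def BOrdBddOp (T : E →ₗ[ℝ] G) : Prop := ∀ A : Set E, BOrdBddSet E A → BOrdBddSet G (T '' A)

/-- `T` is `b`-order continuous: `x_α →bo 0` in `E` implies `T x_α →bo 0` in `G`. -/
def BOCont (T : E →ₗ[ℝ] G) : Prop :=
  ∀ (ι : Type*) [Preorder ι] [Nonempty ι] [IsDirected ι (· ≤ ·)] (x : ι → E),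
    BOConv x 0 → BOConv (fun i => T (x i)) 0

end Operators

/-- The pointwise order on operators on positive cones: `S ≤ T` iff `S x ≤ T x` for `x ≥ 0`. -/
def OpLE {E G : Type*} [AddCommGroup E] [Module ℝ E] [Lattice E]
    [AddCommGroup G] [Module ℝ G] [Lattice G] (S T : E →ₗ[ℝ] G) : Prop :=
  ∀ x : E, 0 ≤ x → S x ≤ T x

/-- `M` is the modulus `|T| = T ∨ (-T)` of `T` within the order bounded operators. -/
def IsModulusOf {E G : Type*} [AddCommGroup E] [Module ℝ E] [Lattice E]
    [AddCommGroup G] [Module ℝ G] [Lattice G]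
    (M T : E →ₗ[ℝ] G) : Prop :=
  OrderBddOp M ∧ OpLE T M ∧ OpLE (-T) M ∧
    ∀ R : E →ₗ[ℝ] G, OrderBddOp R → OpLE T R → OpLE (-T) R → OpLE M R

section OrdBdd

variable {α V : Type*} [AddCommGroup V] [Preorder V] [AddLeftMono V]

lemma OrdBdd.image_add {f g : α → V} {A : Set α} (hf : OrdBdd (f '' A)) (hg : OrdBdd (g '' A)) :
    OrdBdd ((fun a => f a + g a) '' A) := by
  obtain ⟨c, d, hcd⟩ := hf
  obtain ⟨c', d', hcd'⟩ := hg
  refine ⟨c + c', d + d', ?_⟩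
  rintro _ ⟨a, ha, rfl⟩
  obtain ⟨hc, hd⟩ := hcd _ (mem_image_of_mem f ha)
  obtain ⟨hc', hd'⟩ := hcd' _ (mem_image_of_mem g ha)
  exact ⟨add_le_add hc hc', add_le_add hd hd'⟩

lemma OrdBdd.image_sub {f g : α → V} {A : Set α} (hf : OrdBdd (f '' A)) (hg : OrdBdd (g '' A)) :
    OrdBdd ((fun a => f a - g a) '' A) := by
  obtain ⟨c, d, hcd⟩ := hf
  obtain ⟨c', d', hcd'⟩ := hg
  refine ⟨c - d', d - c', ?_⟩
  rintro _ ⟨a, ha, rfl⟩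
  obtain ⟨hc, hd⟩ := hcd _ (mem_image_of_mem f ha)
  obtain ⟨hc', hd'⟩ := hcd' _ (mem_image_of_mem g ha)
  exact ⟨sub_le_sub hc hd', sub_le_sub hd hc'⟩

end OrdBdd

lemma OrdBdd.image_of_monotone {V W : Type*} [Preorder V] [Preorder W] {f : V → W}
    (hf : Monotone f) {S : Set V} (hS : OrdBdd S) : OrdBdd (f '' S) := by
  obtain ⟨a, b, hab⟩ := hS
  refine ⟨f a, f b, ?_⟩
  rintro _ ⟨x, hx, rfl⟩
  exact ⟨hf (hab x hx).1, hf (hab x hx).2⟩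

section OrderDual

variable {V W : Type*} [AddCommGroup V] [Module ℝ V] [Preorder V]
  [AddCommGroup W] [Module ℝ W] [Preorder W]

instance obDual_addLeftMono : AddLeftMono ↥(obDual V) where
  elim f _ _ hgh x hx := by
    simpa only [Submodule.coe_add, LinearMap.add_apply, add_le_add_iff_left] using hgh x hx

-- Instance search does not find this one: it fails to unify with the nested `obDual`.
instance : AddLeftMono (Bidual V) := obDual_addLeftMono (V := ↥(obDual V))

/-- The adjoint `L' : W^~ → V^~`, `g ↦ g ∘ L`. -/
def obDualMap (L : V →ₗ[ℝ] W) (hL : ∀ S : Set V, OrdBdd S → OrdBdd (L '' S)) :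
    ↥(obDual W) →ₗ[ℝ] ↥(obDual V) where
  toFun g := ⟨(g : W →ₗ[ℝ] ℝ) ∘ₗ L, fun S hS => by
    rw [LinearMap.coe_comp, image_comp]
    exact g.2 _ (hL S hS)⟩
  map_add' _ _ := rfl
  map_smul' _ _ := rfl

lemma obDualMap_monotone (L : V →ₗ[ℝ] W) (hL : ∀ S : Set V, OrdBdd S → OrdBdd (L '' S))
    (hpos : ∀ x, 0 ≤ x → 0 ≤ L x) : Monotone (obDualMap L hL) :=
  fun _ _ hgh x hx => hgh (L x) (hpos x hx)

end OrderDual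

section Operators

variable {E F : Type*}
  [AddCommGroup E] [Module ℝ E] [Lattice E] [CovariantClass E E (· + ·) (· ≤ ·)]
  [AddCommGroup F] [Module ℝ F] [Lattice F] [CovariantClass F F (· + ·) (· ≤ ·)]

omit [CovariantClass E E (· + ·) (· ≤ ·)] in
lemma OrderBddOp.add {R₁ R₂ : E →ₗ[ℝ] F} (h₁ : OrderBddOp R₁) (h₂ : OrderBddOp R₂) :
    OrderBddOp (R₁ + R₂) :=
  fun A hA => (h₁ A hA).image_add (h₂ A hA)

omit [CovariantClass E E (· + ·) (· ≤ ·)] in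
lemma OrderBddOp.sub {R₁ R₂ : E →ₗ[ℝ] F} (h₁ : OrderBddOp R₁) (h₂ : OrderBddOp R₂) :
    OrderBddOp (R₁ - R₂) :=
  fun A hA => (h₁ A hA).image_sub (h₂ A hA)

lemma QE_add (x y : E) : QE E (x + y) = QE E x + QE E y := by
  ext f
  exact map_add (f : E →ₗ[ℝ] ℝ) x y

lemma QE_sub (x y : E) : QE E (x - y) = QE E x - QE E y := by
  ext f
  exact map_sub (f : E →ₗ[ℝ] ℝ) x y

omit [Lattice E] [CovariantClass E E (· + ·) (· ≤ ·)] in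
lemma bOrdBddSet_image_iff (R : E →ₗ[ℝ] F) (A : Set E) :
    BOrdBddSet F (R '' A) ↔ OrdBdd ((fun a => QE F (R a)) '' A) := by
  rw [BOrdBddSet, image_image]

lemma BOrdBddOp.add {R₁ R₂ : E →ₗ[ℝ] F} (h₁ : BOrdBddOp R₁) (h₂ : BOrdBddOp R₂) :
    BOrdBddOp (R₁ + R₂) := by
  intro A hA
  have h := ((bOrdBddSet_image_iff R₁ A).1 (h₁ A hA)).image_add
    ((bOrdBddSet_image_iff R₂ A).1 (h₂ A hA))
  rw [bOrdBddSet_image_iff]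
  simpa only [LinearMap.add_apply, QE_add] using h

lemma BOrdBddOp.sub {R₁ R₂ : E →ₗ[ℝ] F} (h₁ : BOrdBddOp R₁) (h₂ : BOrdBddOp R₂) :
    BOrdBddOp (R₁ - R₂) := by
  intro A hA
  have h := ((bOrdBddSet_image_iff R₁ A).1 (h₁ A hA)).image_sub
    ((bOrdBddSet_image_iff R₂ A).1 (h₂ A hA))
  rw [bOrdBddSet_image_iff]
  simpa only [LinearMap.sub_apply, QE_sub] using h

lemma bOrdBddOp_of_nonneg {R : E →ₗ[ℝ] F} (hR : OrderBddOp R) (hpos : ∀ x, 0 ≤ x → 0 ≤ R x) :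
    BOrdBddOp R := by
  set R' := obDualMap R hR
  have hR'_mono : Monotone R' := obDualMap_monotone R hR hpos
  have hR'_bdd : ∀ S, OrdBdd S → OrdBdd (R' '' S) := fun _ => OrdBdd.image_of_monotone hR'_mono
  set R'' := obDualMap (V := ↥(obDual F)) (W := ↥(obDual E)) R' hR'_bdd
  have hR''_mono : Monotone R'' :=
    obDualMap_monotone (V := ↥(obDual F)) (W := ↥(obDual E)) R' hR'_bdd
      fun g hg => by simpa only [map_zero] using hR'_mono hg
  have hR''_QE : ∀ x, R'' (QE E x) = QE F (R x) := fun _ => rfl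
  intro A hA
  have h := hA.image_of_monotone hR''_mono
  rw [image_image] at h
  simpa only [bOrdBddSet_image_iff, hR''_QE] using h

end Operators

theorem bOrdBddOp_iff_modulus_general {E F : Type*}
    [AddCommGroup E] [Module ℝ E] [Lattice E] [CovariantClass E E (· + ·) (· ≤ ·)]
    [AddCommGroup F] [Module ℝ F] [Lattice F] [CovariantClass F F (· + ·) (· ≤ ·)]
    (T M : E →ₗ[ℝ] F) (hT : OrderBddOp T) (hM : IsModulusOf M T) :
    BOrdBddOp T ↔ BOrdBddOp M := by
  obtain ⟨hM_bdd, hT_le, hnegT_le, -⟩ := hM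
  have hMsubT : BOrdBddOp (M - T) :=
    bOrdBddOp_of_nonneg (hM_bdd.sub hT) fun x hx => sub_nonneg.2 (hT_le x hx)
  have hMaddT : BOrdBddOp (M + T) :=
    bOrdBddOp_of_nonneg (hM_bdd.add hT) fun x hx => neg_le_iff_add_nonneg.1 (hnegT_le x hx)
  constructor
  · intro hTb
    simpa only [sub_add_cancel] using hMsubT.add hTb
  · intro hMb
    simpa only [add_sub_cancel_left] using hMaddT.sub hMb

/-- for vector lattices `E`, `F` with `F` Dedekind complete and an order
bounded operator `T : E → F` with modulus `|T|`, `T` is `b`-order bounded iff `|T|` is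
`b`-order bounded. -/
theorem bOrdBddOp_iff_modulus {E F : Type*}
    [AddCommGroup E] [Module ℝ E] [Lattice E] [CovariantClass E E (· + ·) (· ≤ ·)]
    [PosSMulMono ℝ E]
    [AddCommGroup F] [Module ℝ F] [Lattice F] [CovariantClass F F (· + ·) (· ≤ ·)]
    [PosSMulMono ℝ F]
    (hDC : ∀ S : Set F, S.Nonempty → BddAbove S → ∃ a : F, IsLUB S a)
    (T M : E →ₗ[ℝ] F) (hT : OrderBddOp T) (hM : IsModulusOf M T) :
    BOrdBddOp T ↔ BOrdBddOp M :=
  bOrdBddOp_iff_modulus_general T M hT hM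
end
end

section
/- Let E and F be vector lattices. If F is b-Dedekind complete, then a linear operator T : E → F is order bounded if and only if it is b-order bounded, i.e. L_b(E,F) = L_{b~}(E,F). -/
open Set

noncomputable section

variable (V : Type*) [AddCommGroup V] [Module ℝ V] [Preorder V]

variable {V}

variable (E : Type*) [AddCommGroup E] [Module ℝ E] [Lattice E]
  [CovariantClass E E (· + ·) (· ≤ ·)]

variable {E}

open scoped Pointwise

/-!
Since `F` is Dedekind complete, an order bounded `T` is regular (Riesz–Kantorovich):
`T = M - (M - T)` with `M` positive and `M v = sup T[0, v]` for `v ≥ 0`. The bitranspose of a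
difference of positive operators is again such a difference, hence order bounded, and it
intertwines the canonical embeddings: `Q_F ∘ T = T'' ∘ Q_E`. So `T` maps `b`-order bounded sets
to `b`-order bounded sets. Conversely, an order bounded set is `b`-order bounded, and in a
`b`-Dedekind complete space a `b`-order bounded set has a supremum and an infimum.
-/

def IsOrdBddMap {α β : Type*} [Preorder α] [Preorder β] (f : α → β) : Prop :=
  ∀ S : Set α, OrdBdd S → OrdBdd (f '' S)

lemma Monotone.isOrdBddMap {α β : Type*} [Preorder α] [Preorder β] {f : α → β}
    (hf : Monotone f) : IsOrdBddMap f := by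
  rintro S ⟨a, b, hab⟩
  exact ⟨f a, f b, forall_mem_image.2 fun x hx => ⟨hf (hab x hx).1, hf (hab x hx).2⟩⟩

lemma Monotone.isOrdBddMap_sub {α β : Type*} [Preorder α] [AddCommGroup β] [Preorder β]
    [AddLeftMono β] {f g : α → β} (hf : Monotone f) (hg : Monotone g) :
    IsOrdBddMap (f - g) := by
  rintro S ⟨a, b, hab⟩
  refine ⟨f a - g b, f b - g a, forall_mem_image.2 fun x hx => ?_⟩
  obtain ⟨hax, hxb⟩ := hab x hx
  exact ⟨sub_le_sub (hf hax) (hg hxb), sub_le_sub (hf hxb) (hg hax)⟩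

namespace obDual

variable {W : Type*} [AddCommGroup W] [Module ℝ W] [Preorder W]

instance : AddLeftMono (obDual V) :=
  ⟨fun h _ _ hfg x hx => by
    simpa only [Submodule.coe_add, LinearMap.add_apply, add_le_add_iff_left] using hfg x hx⟩

-- `Module ℝ (obDual V)` lives over `Submodule.addCommMonoid`, which instance search does not
-- identify with the additive monoid of `Submodule.addCommGroup`. Hence the previous instance
-- does not apply to `V := obDual V`, and maps between order duals get their types spelled out.
instance : AddLeftMono (Bidual V) :=
  ⟨fun h _ _ hfg x hx => by
    simpa only [Submodule.coe_add, LinearMap.add_apply, add_le_add_iff_left] using hfg x hx⟩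

def transpose (P : V →ₗ[ℝ] W) (hP : IsOrdBddMap P) : obDual W →ₗ[ℝ] obDual V where
  toFun g := ⟨(g : W →ₗ[ℝ] ℝ) ∘ₗ P, fun S hS => by
    rw [LinearMap.coe_comp, image_comp]
    exact g.2 _ (hP S hS)⟩
  map_add' _ _ := rfl
  map_smul' _ _ := rfl

lemma transpose_eq_sub {T P Q : V →ₗ[ℝ] W} (hT : IsOrdBddMap T) (hP : IsOrdBddMap P)
    (hQ : IsOrdBddMap Q) (h : ⇑T = P - Q) :
    ⇑(transpose T hT) = transpose P hP - transpose Q hQ := by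
  ext g x
  simp [transpose, h]

lemma monotone_transpose {P : V →ₗ[ℝ] W} (hP : Monotone P) :
    Monotone (transpose P hP.isOrdBddMap) := fun _ _ hfg x hx =>
  hfg (P x) (by simpa using hP hx)

end obDual

namespace LinearMap

variable {W : Type*} [AddCommGroup W] [Module ℝ W] [Preorder W]

def IsRegular (T : V →ₗ[ℝ] W) : Prop :=
  ∃ P Q : V →ₗ[ℝ] W, Monotone P ∧ Monotone Q ∧ ⇑T = P - Q

lemma monotone_of_map_nonneg [AddLeftMono V] [AddLeftMono W] {T : V →ₗ[ℝ] W}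
    (hT : ∀ v, 0 ≤ v → 0 ≤ T v) : Monotone T := fun x y hxy => by
  simpa using hT (y - x) (sub_nonneg.2 hxy)

variable [AddLeftMono W] {T : V →ₗ[ℝ] W}

lemma IsRegular.isOrdBddMap (hT : T.IsRegular) : IsOrdBddMap T := by
  obtain ⟨P, Q, hP, hQ, hT⟩ := hT
  exact hT ▸ hP.isOrdBddMap_sub hQ

lemma IsRegular.transpose (hT : T.IsRegular) :
    IsRegular (V := obDual W) (W := obDual V) (obDual.transpose T hT.isOrdBddMap) := by
  obtain ⟨P, Q, hP, hQ, hPQ⟩ := hT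
  exact ⟨_, _, obDual.monotone_transpose hP, obDual.monotone_transpose hQ,
    obDual.transpose_eq_sub _ hP.isOrdBddMap hQ.isOrdBddMap hPQ⟩

end LinearMap

section Bidual

variable {F : Type*} [AddCommGroup F] [Module ℝ F] [Lattice F]
  [CovariantClass F F (· + ·) (· ≤ ·)]

lemma monotone_QE : Monotone (QE E) := fun x y hxy f hf => by
  simpa [QE, evalMap] using hf (y - x) (sub_nonneg.2 hxy)

lemma QE_neg (x : E) : QE E (-x) = -QE E x :=
  Subtype.ext <| LinearMap.ext fun f => map_neg (f : E →ₗ[ℝ] ℝ) x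

lemma QE_map (T : E →ₗ[ℝ] F) (hT : IsOrdBddMap T)
    (hT' : IsOrdBddMap (obDual.transpose T hT)) (x : E) :
    QE F (T x) =
      obDual.transpose (V := obDual F) (W := obDual E) (obDual.transpose T hT) hT' (QE E x) :=
  rfl

lemma LinearMap.IsRegular.bOrdBddOp {T : E →ₗ[ℝ] F} (hT : T.IsRegular) : BOrdBddOp T := by
  intro A hA
  have := hT.transpose.transpose.isOrdBddMap _ hA
  rw [image_image] at this
  rwa [BOrdBddSet, image_image, funext (QE_map T hT.isOrdBddMap hT.transpose.isOrdBddMap)]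

lemma BOrdBddSet.of_ordBdd {A : Set E} (hA : OrdBdd A) : BOrdBddSet E A :=
  monotone_QE.isOrdBddMap A hA

lemma BDedekindComplete.exists_isLUB (hF : BDedekindComplete F) {S : Set F}
    (hne : S.Nonempty) (hS : BddAbove S) : ∃ s, IsLUB S s := by
  obtain ⟨b, hb⟩ := hS
  exact hF S hne ⟨QE F b, fun a ha => monotone_QE (hb ha)⟩

lemma BDedekindComplete.ordBdd_of_bOrdBddSet (hF : BDedekindComplete F) {S : Set F}
    (hS : BOrdBddSet F S) : OrdBdd S := by
  rcases S.eq_empty_or_nonempty with rfl | hne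
  · exact ⟨0, 0, by simp⟩
  obtain ⟨Φ, Ψ, hΦΨ⟩ := hS
  obtain ⟨s, hs⟩ := hF S hne ⟨Ψ, fun a ha => (hΦΨ _ (mem_image_of_mem _ ha)).2⟩
  obtain ⟨t, ht⟩ := hF (-S) hne.neg ⟨-Φ, fun a ha => by
    have := neg_le_neg_iff.2 (hΦΨ _ (mem_image_of_mem (QE F) ha)).1
    rw [QE_neg] at this
    exact (neg_neg (QE F a)).symm.trans_le this⟩
  exact ⟨-t, s, fun x hx => ⟨neg_le.1 (ht.1 (by simpa using hx)), hs.1 hx⟩⟩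

end Bidual

lemma Icc_zero_add_Icc_zero {α : Type*} [AddCommGroup α] [Lattice α] [AddLeftMono α] {v w : α}
    (hv : 0 ≤ v) (hw : 0 ≤ w) : Icc 0 v + Icc 0 w = Icc 0 (v + w) := by
  refine Subset.antisymm ?_ fun u ⟨hu0, huvw⟩ => ?_
  · rintro _ ⟨a, ⟨ha0, hav⟩, b, ⟨hb0, hbw⟩, rfl⟩
    exact ⟨add_nonneg ha0 hb0, add_le_add hav hbw⟩
  · refine ⟨u ⊓ v, ⟨le_inf hu0 hv, inf_le_right⟩, u - u ⊓ v,
      ⟨sub_nonneg.2 inf_le_left, ?_⟩, add_sub_cancel _ _⟩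
    rw [sub_le_iff_le_add, add_inf]
    exact le_inf (le_add_of_nonneg_left hw) (by rwa [add_comm])

lemma isLUB_image_Icc_zero_add {F : Type*} [AddCommGroup F] [Module ℝ F] [Preorder F]
    [AddLeftMono F] (T : E →ₗ[ℝ] F) {v w : E} {a b : F} (hv : 0 ≤ v) (hw : 0 ≤ w)
    (ha : IsLUB (T '' Icc 0 v) a) (hb : IsLUB (T '' Icc 0 w) b) :
    IsLUB (T '' Icc 0 (v + w)) (a + b) := by
  rw [← Icc_zero_add_Icc_zero hv hw, image_add]
  exact ha.add hb

lemma isLUB_image_Icc_zero_smul {E F : Type*} [AddCommGroup E] [Module ℝ E] [PartialOrder E]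
    [PosSMulMono ℝ E] [AddCommGroup F] [Module ℝ F] [PartialOrder F] [PosSMulMono ℝ F]
    (T : E →ₗ[ℝ] F) {v : E} {a : F} {c : ℝ} (hc : 0 < c) (ha : IsLUB (T '' Icc 0 v) a) :
    IsLUB (T '' Icc 0 (c • v)) (c • a) := by
  have hIcc : Icc 0 (c • v) = OrderIso.smulRight hc '' Icc 0 v := by
    rw [OrderIso.image_Icc]
    simp
  have hT : T '' Icc 0 (c • v) = OrderIso.smulRight hc '' (T '' Icc 0 v) := by
    rw [hIcc, image_image, image_image]
    simp
  rw [hT]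
  exact (OrderIso.smulRight hc).isLUB_image'.2 ha

section RieszKantorovich

variable {F : Type*} [AddCommGroup F] [Module ℝ F] [Lattice F]
  [CovariantClass F F (· + ·) (· ≤ ·)] [PosSMulMono ℝ E]

lemma exists_linearMap_eqOn_nonneg {G : Type*} [AddCommGroup G] [Module ℝ G] (p : E → G)
    (hadd : ∀ v w, 0 ≤ v → 0 ≤ w → p (v + w) = p v + p w)
    (hsmul : ∀ c : ℝ, 0 < c → ∀ v, 0 ≤ v → p (c • v) = c • p v) :
    ∃ L : E →ₗ[ℝ] G, ∀ v, 0 ≤ v → L v = p v := by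
  have hzero : p 0 = 0 := by simpa using hadd 0 0 le_rfl le_rfl
  have hsmul' : ∀ c : ℝ, 0 ≤ c → ∀ v, 0 ≤ v → p (c • v) = c • p v := by
    intro c hc v hv
    rcases hc.eq_or_lt with rfl | hc
    · simp [hzero]
    · exact hsmul c hc v hv
  set q : E → G := fun x => p x⁺ - p x⁻
  have hq : ∀ x a b, 0 ≤ a → 0 ≤ b → x = a - b → q x = p a - p b := by
    intro x a b ha hb hx
    have h : x⁺ + b = a + x⁻ := by
      rw [← sub_eq_sub_iff_add_eq_add, posPart_sub_negPart, hx]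
    have := congrArg p h
    rw [hadd _ _ (posPart_nonneg x) hb, hadd _ _ ha (negPart_nonneg x)] at this
    exact sub_eq_sub_iff_add_eq_add.2 this
  have hpos (x : E) : 0 ≤ x⁺ := posPart_nonneg x
  have hneg (x : E) : 0 ≤ x⁻ := negPart_nonneg x
  refine ⟨{ toFun := q, map_add' := fun x y => ?_, map_smul' := fun c x => ?_ }, fun v hv => ?_⟩
  · have hxy : x + y = (x⁺ + y⁺) - (x⁻ + y⁻) := by
      rw [add_sub_add_comm, posPart_sub_negPart, posPart_sub_negPart]
    rw [hq _ _ _ (add_nonneg (hpos x) (hpos y)) (add_nonneg (hneg x) (hneg y)) hxy,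
      hadd _ _ (hpos x) (hpos y), hadd _ _ (hneg x) (hneg y), add_sub_add_comm]
  · rw [RingHom.id_apply]
    rcases le_or_gt 0 c with hc | hc
    · have hcx : c • x = c • x⁺ - c • x⁻ := by rw [← smul_sub, posPart_sub_negPart]
      rw [hq _ _ _ (smul_nonneg hc (hpos x)) (smul_nonneg hc (hneg x)) hcx,
        hsmul' c hc _ (hpos x), hsmul' c hc _ (hneg x), ← smul_sub]
    · have hc' : 0 ≤ -c := neg_nonneg.2 hc.le
      have hcx : c • x = (-c) • x⁻ - (-c) • x⁺ := by
        rw [← smul_sub, ← neg_sub, posPart_sub_negPart, smul_neg, neg_smul, neg_neg]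
      rw [hq _ _ _ (smul_nonneg hc' (hneg x)) (smul_nonneg hc' (hpos x)) hcx,
        hsmul' _ hc' _ (hneg x), hsmul' _ hc' _ (hpos x), ← smul_sub, ← neg_sub, smul_neg,
        neg_smul, neg_neg]
  · simpa [hzero] using hq v v 0 hv le_rfl (sub_zero v).symm

variable [PosSMulMono ℝ F]

lemma exists_linearMap_isLUB_image_Icc_zero
    (hF : ∀ S : Set F, S.Nonempty → BddAbove S → ∃ s, IsLUB S s) {T : E →ₗ[ℝ] F}
    (hT : OrderBddOp T) :
    ∃ M : E →ₗ[ℝ] F, ∀ v, 0 ≤ v → IsLUB (T '' Icc 0 v) (M v) := by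
  have hsup : ∀ v : E, 0 ≤ v → ∃ s, IsLUB (T '' Icc 0 v) s := fun v hv => by
    obtain ⟨_, b, hb⟩ := hT (Icc 0 v) ⟨0, v, fun x hx => hx⟩
    exact hF _ ((nonempty_Icc.2 hv).image T) ⟨b, fun y hy => (hb y hy).2⟩
  choose! p hp using hsup
  obtain ⟨M, hM⟩ := exists_linearMap_eqOn_nonneg p
    (fun v w hv hw => (hp _ (add_nonneg hv hw)).unique
      (isLUB_image_Icc_zero_add T hv hw (hp v hv) (hp w hw)))
    (fun c hc v hv => (hp _ (smul_nonneg hc.le hv)).unique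
      (isLUB_image_Icc_zero_smul T hc (hp v hv)))
  exact ⟨M, fun v hv => hM v hv ▸ hp v hv⟩

lemma OrderBddOp.isRegular (hF : ∀ S : Set F, S.Nonempty → BddAbove S → ∃ s, IsLUB S s)
    {T : E →ₗ[ℝ] F} (hT : OrderBddOp T) : T.IsRegular := by
  obtain ⟨M, hM⟩ := exists_linearMap_isLUB_image_Icc_zero hF hT
  refine ⟨M, M - T, LinearMap.monotone_of_map_nonneg fun v hv => ?_,
    LinearMap.monotone_of_map_nonneg fun v hv => ?_, funext fun x => by simp⟩
  · simpa using (hM v hv).1 (mem_image_of_mem T (left_mem_Icc.2 hv))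
  · exact sub_nonneg.2 ((hM v hv).1 (mem_image_of_mem T (right_mem_Icc.2 hv)))

end RieszKantorovich

theorem orderBddOp_iff_bOrdBddOp_general {E F : Type*}
    [AddCommGroup E] [Module ℝ E] [Lattice E] [CovariantClass E E (· + ·) (· ≤ ·)]
    [PosSMulMono ℝ E]
    [AddCommGroup F] [Module ℝ F] [Lattice F] [CovariantClass F F (· + ·) (· ≤ ·)]
    [PosSMulMono ℝ F]
    (hbDC : BDedekindComplete F)
    (T : E →ₗ[ℝ] F) :
    OrderBddOp T ↔ BOrdBddOp T :=
  ⟨fun hT => (hT.isRegular fun _ => hbDC.exists_isLUB).bOrdBddOp,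
    fun hT A hA => hbDC.ordBdd_of_bOrdBddSet (hT A (BOrdBddSet.of_ordBdd hA))⟩

/-- if `F` is `b`-Dedekind complete, then a linear operator `T : E → F` is
order bounded iff it is `b`-order bounded, i.e. `L_b(E,F) = L_{b~}(E,F)`. -/
theorem orderBddOp_iff_bOrdBddOp {E F : Type*}
    [AddCommGroup E] [Module ℝ E] [Lattice E] [CovariantClass E E (· + ·) (· ≤ ·)]
    [PosSMulMono ℝ E]
    [AddCommGroup F] [Module ℝ F] [Lattice F] [CovariantClass F F (· + ·) (· ≤ ·)]
    [PosSMulMono ℝ F]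
    (hembF : QLatticeEmbedding F) (hbDC : BDedekindComplete F)
    (T : E →ₗ[ℝ] F) :
    OrderBddOp T ↔ BOrdBddOp T :=
  orderBddOp_iff_bOrdBddOp_general hbDC T
end
end
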